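/- arXiv:1902.02492 — 3 statements merged into one kernel-verified Lean document; each statement's English description precedes it below -/
import Mathlib

section
/- The singular values of the n×n lower triangular matrix of all ones are σ_s = (2 - 2cos((s+1/2)π/(n+1/2)))^{-1/2} for s = 0,...,n-1. -/
/-!
The matrix `D` with `(D v)ᵢ = vᵢ - vᵢ₋₁` inverts the all-ones lower triangular matrix `L`, so
`LᵀL` is the inverse of `D Dᵀ`, a discrete second difference with boundary conditions `v₋₁ = v₀`
and `vₙ = 0`. The sampled cosines `vₖ = cos ((k + 1/2) θ)` satisfy the first condition because
cosine is even, the second exactly when `θ = θₛ = (s + 1/2) π / (n + 1/2)`, and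
`cos ((k+1/2)θ + θ) + cos ((k+1/2)θ - θ) = 2 cos θ · vₖ` makes them eigenvectors of `D Dᵀ` with
eigenvalue `2 - 2 cos θₛ`. The `n` angles `θₛ` are distinct points of `(0, π)`, so these
eigenvalues are distinct and exhaust the characteristic polynomial.
-/

open Polynomial Real Matrix

section Charpoly

variable {ι K : Type*} [Fintype ι] [DecidableEq ι] [Field K]

theorem Matrix.isRoot_charpoly_of_mulVec_eq_smul {M : Matrix ι ι K} {μ : K} {v : ι → K}
    (hv : v ≠ 0) (h : M *ᵥ v = μ • v) : M.charpoly.IsRoot μ := by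
  rw [IsRoot, eval_charpoly, ← exists_mulVec_eq_zero_iff]
  exact ⟨v, hv, by simp [sub_mulVec, h, scalar_apply]⟩

theorem Matrix.charpoly_eq_prod_of_mulVec_eq_smul (M : Matrix ι ι K) {μ : ι → K}
    (hμ : Function.Injective μ) {v : ι → ι → K} (hv : ∀ s, v s ≠ 0)
    (h : ∀ s, M *ᵥ v s = μ s • v s) : M.charpoly = ∏ s, (X - C (μ s)) := by
  refine eq_of_monic_of_dvd_of_natDegree_le (monic_prod_X_sub_C μ _) M.charpoly_monic ?_ ?_
  · exact Finset.prod_dvd_of_coprime ((pairwise_coprime_X_sub_C hμ).set_pairwise _)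
      fun s _ => dvd_iff_isRoot.mpr (isRoot_charpoly_of_mulVec_eq_smul (hv s) (h s))
  · rw [charpoly_natDegree_eq_dim, natDegree_finsetProd_X_sub_C_eq_card, Finset.card_univ]

theorem Matrix.mulVec_eq_inv_smul_of_mul_eq_one {A B : Matrix ι ι K} (hAB : A * B = 1)
    {μ : K} {v : ι → K} (h : B *ᵥ v = μ • v) : A *ᵥ v = μ⁻¹ • v := by
  have hv : v = μ • A *ᵥ v := by rw [← mulVec_smul, ← h, mulVec_mulVec, hAB, one_mulVec]
  rcases eq_or_ne μ 0 with rfl | hμ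
  · rw [zero_smul] at hv
    simp [hv]
  · conv_rhs => rw [hv]
    rw [smul_smul, inv_mul_cancel₀ hμ, one_smul]

end Charpoly

section DiffMatrix

variable {n : ℕ} {R : Type*} [Ring R]

/- Vectors are restrictions of sequences `f : ℤ → R`, so that the boundary values `f (-1)` and
`f n` can be stated. -/
def diffMatrix (n : ℕ) (R : Type*) [Ring R] : Matrix (Fin n) (Fin n) R :=
  of fun i j => if j = i then 1 else if (j : ℤ) = i - 1 then -1 else 0

theorem Fin.sum_ite_intCast_eq (f : ℤ → R) {m : ℤ} (hm : f m ≠ 0 → 0 ≤ m ∧ m < n) :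
    ∑ j : Fin n, (if (j : ℤ) = m then f j else 0) = f m := by
  by_cases h : 0 ≤ m ∧ m < n
  · lift m to ℕ using h.1
    rw [Finset.sum_eq_single_of_mem ⟨m, by exact_mod_cast h.2⟩ (Finset.mem_univ _)]
    · simp
    · intro j _ hj
      rw [if_neg]
      exact fun hjm => hj (Fin.ext (by exact_mod_cast hjm))
  · rw [not_imp_comm.mp hm h, Finset.sum_eq_zero]
    intro j _
    rw [if_neg]
    rintro rfl
    exact h ⟨by positivity, by exact_mod_cast j.isLt⟩

theorem diffMatrix_mulVec (f : ℤ → R) (hf : f (-1) = 0) :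
    diffMatrix n R *ᵥ (fun k : Fin n => f k) = fun i : Fin n => f i - f (i - 1) := by
  ext i
  have hsplit (j : Fin n) : diffMatrix n R i j * f j
      = (if j = i then f j else 0) - (if (j : ℤ) = i - 1 then f j else 0) := by
    simp only [diffMatrix, of_apply, Fin.ext_iff]
    split_ifs <;> first | (exfalso; omega) | simp
  simp only [mulVec, dotProduct, hsplit, Finset.sum_sub_distrib, Finset.sum_ite_eq',
    Finset.mem_univ, if_true]
  rw [Fin.sum_ite_intCast_eq f]
  intro h
  have : (i : ℤ) - 1 ≠ -1 := fun h' => h (h' ▸ hf)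
  omega

theorem diffMatrix_transpose_mulVec (f : ℤ → R) (hf : f n = 0) :
    (diffMatrix n R)ᵀ *ᵥ (fun k : Fin n => f k) = fun i : Fin n => f i - f (i + 1) := by
  ext i
  have hsplit (j : Fin n) : (diffMatrix n R)ᵀ i j * f j
      = (if j = i then f j else 0) - (if (j : ℤ) = i + 1 then f j else 0) := by
    simp only [transpose_apply, diffMatrix, of_apply, Fin.ext_iff]
    split_ifs <;> first | (exfalso; omega) | simp
  simp only [mulVec, dotProduct, hsplit, Finset.sum_sub_distrib, Finset.sum_ite_eq',
    Finset.mem_univ, if_true]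
  rw [Fin.sum_ite_intCast_eq f]
  intro h
  have : (i : ℤ) + 1 ≠ n := fun h' => h (h' ▸ hf)
  omega

theorem diffMatrix_mul_eq_one {L : Matrix (Fin n) (Fin n) R}
    (hL : ∀ i j, L i j = if j ≤ i then 1 else 0) : diffMatrix n R * L = 1 := by
  ext i j
  set step : ℤ → R := fun k => if (j : ℤ) ≤ k then 1 else 0
  have hcol : (fun k : Fin n => L k j) = fun k : Fin n => step k := by
    funext k
    rw [hL]
    exact if_congr (by omega) rfl rfl
  calc (diffMatrix n R * L) i j = (diffMatrix n R *ᵥ fun k => L k j) i := rfl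
    _ = step i - step (i - 1) := by rw [hcol, diffMatrix_mulVec step (if_neg (by omega))]
    _ = (1 : Matrix (Fin n) (Fin n) R) i j := by
      simp only [step, one_apply, Fin.ext_iff]
      split_ifs <;> first | (exfalso; omega) | simp

end DiffMatrix

theorem cos_half_int_mul_second_diff (t : ℝ) (k : ℤ) :
    (cos ((k + 1/2) * t) - cos ((((k + 1 : ℤ) : ℝ) + 1/2) * t))
      - (cos ((((k - 1 : ℤ) : ℝ) + 1/2) * t) - cos ((k + 1/2) * t))
      = (2 - 2 * cos t) * cos ((k + 1/2) * t) := by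
  have hadd : (((k + 1 : ℤ) : ℝ) + 1/2) * t = (k + 1/2) * t + t := by push_cast; ring
  have hsub : (((k - 1 : ℤ) : ℝ) + 1/2) * t = (k + 1/2) * t - t := by push_cast; ring
  rw [hadd, hsub, cos_add, cos_sub]
  ring

theorem diffMatrix_mul_transpose_mulVec_cos {n : ℕ} {t : ℝ} (ht : cos ((n + 1/2) * t) = 0) :
    (diffMatrix n ℝ * (diffMatrix n ℝ)ᵀ) *ᵥ (fun k : Fin n => cos ((k + 1/2) * t))
      = (2 - 2 * cos t) • fun k : Fin n => cos ((k + 1/2) * t) := by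
  set c : ℤ → ℝ := fun k => cos ((k + 1/2) * t)
  have hc : (fun k : Fin n => cos ((k + 1/2) * t)) = fun k : Fin n => c k := by
    funext k
    simp [c]
  rw [hc, ← mulVec_mulVec, diffMatrix_transpose_mulVec c (by simpa [c] using ht),
    diffMatrix_mulVec (fun k => c k - c (k + 1)) ?_]
  · funext i
    simp only [Pi.smul_apply, smul_eq_mul, sub_add_cancel]
    exact cos_half_int_mul_second_diff t i
  · have : (((-1 : ℤ) : ℝ) + 1/2) * t = -((((-1 + 1 : ℤ) : ℝ) + 1/2) * t) := by push_cast; ring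
    simp only [c, this, cos_neg, sub_self]

noncomputable def eigenAngle (n s : ℕ) : ℝ := (s + 1/2) * π / (n + 1/2)

theorem eigenAngle_mem_Ioo {n s : ℕ} (hs : s < n) : eigenAngle n s ∈ Set.Ioo 0 π := by
  have hsn : (s : ℝ) < n := by exact_mod_cast hs
  constructor
  · unfold eigenAngle
    positivity
  · rw [eigenAngle, div_lt_iff₀ (by positivity)]
    nlinarith [pi_pos]

theorem eigenAngle_injective (n : ℕ) : Function.Injective (eigenAngle n) := by
  intro s s' h
  simpa only [eigenAngle, div_left_inj' (by positivity : (n : ℝ) + 1/2 ≠ 0),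
    mul_left_inj' pi_ne_zero, add_left_inj, Nat.cast_inj] using h

theorem cos_mul_eigenAngle (n s : ℕ) : cos ((n + 1/2) * eigenAngle n s) = 0 := by
  rw [cos_eq_zero_iff]
  exact ⟨s, by rw [eigenAngle]; field_simp; push_cast; ring⟩

theorem Real.rpow_neg_one_half_sq {x : ℝ} (hx : 0 ≤ x) : (x ^ (-(1/2) : ℝ)) ^ 2 = x⁻¹ := by
  rw [rpow_neg hx, ← sqrt_eq_rpow, inv_pow, sq_sqrt hx]

/-- The singular values of the n×n lower triangular matrix of all ones are
`σ_s = (2 - 2cos((s+1/2)π/(n+1/2)))^{-1/2}` for `s = 0,…,n-1`; formalized as: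
the eigenvalues of `LᵀL` (whose square roots are the singular values of `L`)
are exactly the `σ_s²`, i.e. the characteristic polynomial of `LᵀL` splits as
`∏ₛ (X - σ_s²)`. -/
theorem stmt0 (n : ℕ) (L : Matrix (Fin n) (Fin n) ℝ)
    (hL : ∀ i j, L i j = if j ≤ i then 1 else 0) :
    (Lᵀ * L).charpoly =
      ∏ s : Fin n,
        (X - C (((2 - 2 * Real.cos ((((s : ℝ) + 1/2)) * π / ((n : ℝ) + 1/2)))
            ^ (-(1/2) : ℝ)) ^ 2)) := by
  set μ : Fin n → ℝ := fun s => 2 - 2 * cos (eigenAngle n s)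
  have hθ (s : Fin n) : eigenAngle n s ∈ Set.Ioo 0 π := eigenAngle_mem_Ioo s.isLt
  have hμ_inj : Function.Injective μ := fun s s' h =>
    Fin.val_injective <| eigenAngle_injective n <|
      injOn_cos (Set.Ioo_subset_Icc_self (hθ s)) (Set.Ioo_subset_Icc_self (hθ s'))
        (by simpa [μ] using h)
  have hv (s : Fin n) : (fun k : Fin n => cos ((k + 1/2) * eigenAngle n s)) ≠ 0 := by
    intro h
    obtain ⟨hθ0, hθπ⟩ := hθ s
    refine (cos_pos_of_mem_Ioo (x := (0 + 1/2) * eigenAngle n s) ⟨?_, ?_⟩).ne' ?_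
    · linarith
    · linarith
    · simpa using congrFun h ⟨0, s.pos⟩
  have hLD : (Lᵀ * L) * (diffMatrix n ℝ * (diffMatrix n ℝ)ᵀ) = 1 := by
    have hDL := diffMatrix_mul_eq_one hL
    rw [Matrix.mul_assoc, ← Matrix.mul_assoc L, mul_eq_one_comm.mp hDL, Matrix.one_mul,
      ← transpose_mul, hDL, transpose_one]
  rw [charpoly_eq_prod_of_mulVec_eq_smul _ (inv_injective.comp hμ_inj) hv fun s =>
    mulVec_eq_inv_smul_of_mul_eq_one hLD
      (diffMatrix_mul_transpose_mulVec_cos (cos_mul_eigenAngle n s))]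
  refine Finset.prod_congr rfl fun s _ => ?_
  have hμ_nonneg : 0 ≤ μ s := by linarith [cos_le_one (eigenAngle n s)]
  exact congrArg (fun a => X - C a) (rpow_neg_one_half_sq hμ_nonneg).symm
end

section
/- For each s = 0,...,n-1, the vector v_s with entries v_s(t) = (n/2+1/4)^{-1/2} cos((s+1/2)(t+1/2)π/(n+1/2)) is a right singular vector of 1_L with singular value σ_s = (2 - 2cos((s+1/2)π/(n+1/2)))^{-1/2}; that is, 1_L^T 1_L v_s = σ_s² v_s. -/
/-!
Put `w t = cos (a (t + 1/2))`. Since `L` takes partial sums and `Lᵀ` takes tail sums, multiplying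
by `2 sin (a/2)` makes both telescope (product-to-sum formulas), which gives
`(2 - 2 cos a) (LᵀL w)ᵢ = wᵢ - cos (a (n + 1/2))` for every `a`.
For `a = (s + 1/2) π / (n + 1/2)` the boundary term is `cos ((s + 1/2) π) = 0`.
-/

open Real Matrix Finset

section LowerOnes

variable {R : Type*} [NonAssocSemiring R] {n : ℕ} {L : Matrix (Fin n) (Fin n) R}

theorem mulVec_apply_eq_sum_range (hL : ∀ i j, L i j = if j ≤ i then 1 else 0)
    (g : ℕ → R) (k : Fin n) : (L *ᵥ fun j => g j) k = ∑ j ∈ range (k + 1), g j := by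
  have : univ.filter (· ≤ k) = Iic k := by ext; simp
  simp only [mulVec, dotProduct, hL, ite_mul, one_mul, zero_mul]
  rw [← sum_filter, this, Nat.range_succ_eq_Iic, ← Fin.map_valEmbedding_Iic, sum_map]
  rfl

theorem transpose_mulVec_apply_eq_sum_Ico (hL : ∀ i j, L i j = if j ≤ i then 1 else 0)
    (g : ℕ → R) (i : Fin n) : (Lᵀ *ᵥ fun k => g k) i = ∑ k ∈ Ico (i : ℕ) n, g k := by
  have : univ.filter (i ≤ ·) = Ici i := by ext; simp
  simp only [mulVec, dotProduct, transpose_apply, hL, ite_mul, one_mul, zero_mul]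
  rw [← sum_filter, this, ← Fin.map_valEmbedding_Ici, sum_map]
  rfl

end LowerOnes

theorem two_sub_two_mul_cos (x : ℝ) : 2 - 2 * cos x = (2 * sin (x / 2)) ^ 2 := by
  nth_rw 1 [← mul_div_cancel₀ x two_ne_zero, cos_two_mul, cos_sq']
  ring

theorem two_mul_sin_half_mul_sum_cos (a : ℝ) (m : ℕ) :
    2 * sin (a / 2) * ∑ j ∈ range m, cos (a * (j + 1 / 2)) = sin (a * m) := by
  have telescope (j : ℕ) :
      2 * sin (a / 2) * cos (a * (j + 1 / 2)) = sin (a * ↑(j + 1)) - sin (a * j) := by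
    rw [Nat.cast_succ, show a * (j + 1) = a * (j + 1 / 2) + a / 2 by ring,
      show a * j = a * (j + 1 / 2) - a / 2 by ring, sin_add, sin_sub]
    ring
  simp_rw [mul_sum, telescope]
  rw [sum_range_sub (fun j : ℕ => sin (a * j))]
  simp

theorem two_mul_sin_half_mul_sum_Ico_sin (a : ℝ) {l m : ℕ} (hlm : l ≤ m) :
    2 * sin (a / 2) * ∑ k ∈ Ico l m, sin (a * (k + 1)) =
      cos (a * (l + 1 / 2)) - cos (a * (m + 1 / 2)) := by
  have telescope (k : ℕ) : 2 * sin (a / 2) * sin (a * (k + 1)) =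
      -cos (a * (↑(k + 1) + 1 / 2)) - -cos (a * (k + 1 / 2)) := by
    rw [Nat.cast_succ, show a * (k + 1 + 1 / 2) = a * (k + 1) + a / 2 by ring,
      show a * (k + 1 / 2) = a * (k + 1) - a / 2 by ring, cos_add, cos_sub]
    ring
  simp_rw [mul_sum, telescope]
  rw [sum_Ico_sub (fun k : ℕ => -cos (a * (k + 1 / 2))) hlm]
  ring

theorem two_sub_two_mul_cos_mul_transpose_mul_self_mulVec_cos {n : ℕ}
    {L : Matrix (Fin n) (Fin n) ℝ} (hL : ∀ i j, L i j = if j ≤ i then 1 else 0) (a : ℝ)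
    (i : Fin n) :
    (2 - 2 * cos a) * ((Lᵀ * L) *ᵥ fun t => cos (a * (t + 1 / 2))) i =
      cos (a * (i + 1 / 2)) - cos (a * (n + 1 / 2)) := by
  rw [two_sub_two_mul_cos, sq, mul_assoc, ← mulVec_mulVec]
  set e := 2 * sin (a / 2)
  have partial_sums : e • (L *ᵥ fun t => cos (a * (t + 1 / 2))) =
      fun k : Fin n => sin (a * ((k : ℕ) + 1)) := by
    ext k
    rw [Pi.smul_apply, mulVec_apply_eq_sum_range hL (fun j => cos (a * (j + 1 / 2))),
      smul_eq_mul, two_mul_sin_half_mul_sum_cos]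
    push_cast
    rfl
  have smul_inside : e * (Lᵀ *ᵥ L *ᵥ fun t => cos (a * (t + 1 / 2))) i =
      (Lᵀ *ᵥ e • L *ᵥ fun t => cos (a * (t + 1 / 2))) i := by
    rw [mulVec_smul]; rfl
  rw [smul_inside, partial_sums,
    transpose_mulVec_apply_eq_sum_Ico hL (fun k => sin (a * (k + 1))),
    two_mul_sin_half_mul_sum_Ico_sin a i.isLt.le]

theorem rpow_neg_half_sq {x : ℝ} (hx : 0 ≤ x) : (x ^ (-(1 / 2) : ℝ)) ^ 2 = x⁻¹ := by
  rw [rpow_neg hx, inv_pow, ← sqrt_eq_rpow, sq_sqrt hx]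

/-- For each `s`, the vector `v_s(t) = (n/2+1/4)^{-1/2} cos((s+1/2)(t+1/2)π/(n+1/2))`
is a right singular vector of the lower triangular all-ones matrix `1_L` with
singular value `σ_s = (2 - 2cos((s+1/2)π/(n+1/2)))^{-1/2}`; that is,
`1_Lᵀ 1_L v_s = σ_s² v_s`. -/
theorem stmt3 (n : ℕ) (L : Matrix (Fin n) (Fin n) ℝ)
    (hL : ∀ i j, L i j = if j ≤ i then 1 else 0)
    (s : Fin n) (v : Fin n → ℝ)
    (hv : ∀ t : Fin n, v t =
      (((n : ℝ)/2 + 1/4) ^ (-(1/2) : ℝ)) *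
        Real.cos (((s : ℝ) + 1/2) * ((t : ℝ) + 1/2) * π / ((n : ℝ) + 1/2))) :
    (Lᵀ * L).mulVec v =
      (((2 - 2 * Real.cos (((s : ℝ) + 1/2) * π / ((n : ℝ) + 1/2))) ^ (-(1/2) : ℝ)) ^ 2) • v := by
  set a := ((s : ℝ) + 1 / 2) * π / ((n : ℝ) + 1 / 2) with ha
  have hv_eq : v =
      ((n / 2 + 1 / 4 : ℝ) ^ (-(1 / 2) : ℝ)) • fun t : Fin n => cos (a * (t + 1 / 2)) := by
    ext t
    rw [hv t, Pi.smul_apply, smul_eq_mul, ha]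
    ring_nf
  have hcos_end : cos (a * (n + 1 / 2)) = 0 :=
    cos_eq_zero_iff.2 ⟨s, by rw [ha]; field_simp; push_cast; ring⟩
  have ha_pos : 0 < a := by rw [ha]; positivity
  have ha_lt : a < π := by
    have hs : (s : ℝ) < n := by exact_mod_cast s.isLt
    rw [ha, div_lt_iff₀ (by positivity)]
    nlinarith [pi_pos]
  have hgap : 0 < 2 - 2 * cos a := by
    rw [two_sub_two_mul_cos]
    have hsin := sin_pos_of_pos_of_lt_pi (half_pos ha_pos) (by linarith)
    positivity
  rw [rpow_neg_half_sq hgap.le, hv_eq, mulVec_smul, smul_comm]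
  congr 1
  ext i
  rw [Pi.smul_apply, smul_eq_mul, eq_inv_mul_iff_mul_eq₀ hgap.ne',
    two_sub_two_mul_cos_mul_transpose_mul_self_mulVec_cos hL, hcos_end, sub_zero]
end

section
/- For each s = 0,...,n-1, 1_L v_s = σ_s u_s, where u_s(t) = (n/2+1/4)^{-1/2} sin((s+1/2)(t+1)π/(n+1/2)), v_s(t) = (n/2+1/4)^{-1/2} cos((s+1/2)(t+1/2)π/(n+1/2)), and σ_s = (2 - 2cos((s+1/2)π/(n+1/2)))^{-1/2}. -/
open Real

lemma keysum (a : ℝ) (k : ℕ) :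
    2 * Real.sin (a/2) * ∑ j ∈ Finset.range k, Real.cos (((j : ℝ) + 1/2) * a)
      = Real.sin ((k : ℝ) * a) := by
  induction k with
  | zero => simp
  | succ k ih =>
    rw [Finset.sum_range_succ, mul_add, ih]
    have h : Real.sin (((k:ℝ)+1) * a) - Real.sin ((k:ℝ) * a)
        = 2 * Real.sin (a/2) * Real.cos (((k:ℝ) + 1/2)*a) := by
      rw [Real.sin_sub_sin]; ring_nf
    push_cast
    linarith [h]

/-- For each `s`, `1_L v_s = σ_s u_s`, where
`u_s(t) = (n/2+1/4)^{-1/2} sin((s+1/2)(t+1)π/(n+1/2))`,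
`v_s(t) = (n/2+1/4)^{-1/2} cos((s+1/2)(t+1/2)π/(n+1/2))`, and
`σ_s = (2 - 2cos((s+1/2)π/(n+1/2)))^{-1/2}`. -/
theorem stmt4 (n : ℕ) (L : Matrix (Fin n) (Fin n) ℝ)
    (hL : ∀ i j, L i j = if j ≤ i then 1 else 0)
    (s : Fin n) (u v : Fin n → ℝ)
    (hu : ∀ t : Fin n, u t =
      (((n : ℝ)/2 + 1/4) ^ (-(1/2) : ℝ)) *
        Real.sin (((s : ℝ) + 1/2) * ((t : ℝ) + 1) * π / ((n : ℝ) + 1/2)))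
    (hv : ∀ t : Fin n, v t =
      (((n : ℝ)/2 + 1/4) ^ (-(1/2) : ℝ)) *
        Real.cos (((s : ℝ) + 1/2) * ((t : ℝ) + 1/2) * π / ((n : ℝ) + 1/2))) :
    L.mulVec v =
      ((2 - 2 * Real.cos (((s : ℝ) + 1/2) * π / ((n : ℝ) + 1/2))) ^ (-(1/2) : ℝ)) • u := by
  have hn : (0:ℝ) < (n:ℝ) + 1/2 := by positivity
  set a : ℝ := ((s:ℝ) + 1/2) * π / ((n:ℝ) + 1/2) with ha
  have hapos : 0 < a := by
    apply div_pos (mul_pos (by positivity) pi_pos) hn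
  have hslt : (s:ℝ) < (n:ℝ) := by exact_mod_cast s.is_lt
  have halt : a < π := by
    rw [ha, div_lt_iff₀ hn]
    nlinarith [pi_pos]
  have hsin : 0 < Real.sin (a/2) :=
    Real.sin_pos_of_pos_of_lt_pi (by linarith) (by linarith [pi_pos])
  set c : ℝ := (((n : ℝ)/2 + 1/4) ^ (-(1/2) : ℝ)) with hc
  have hsigma : ((2 - 2 * Real.cos a) ^ (-(1/2) : ℝ)) = 1 / (2 * Real.sin (a/2)) := by
    have hcc : 2 - 2 * Real.cos a = (2 * Real.sin (a/2))^2 := by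
      have h1 : Real.cos a = 2 * Real.cos (a/2)^2 - 1 := by
        have := Real.cos_two_mul (a/2)
        rwa [show (2:ℝ)*(a/2) = a by ring] at this
      have h2 := Real.sin_sq_add_cos_sq (a/2)
      nlinarith
    rw [hcc, ← Real.rpow_natCast (2*Real.sin (a/2)) 2,
      ← Real.rpow_mul (by linarith)]
    norm_num
    rw [show ((-1:ℝ)) = ((-1 : ℤ) : ℝ) by norm_num, Real.rpow_intCast, zpow_neg_one,
      mul_inv]
    ring
  have hang : ∀ x : ℝ, ((s:ℝ)+1/2) * x * π / ((n:ℝ)+1/2) = x * a := by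
    intro x; rw [ha]; ring
  funext t
  have hfil : (Finset.range n).filter (· ≤ (t:ℕ)) = Finset.range ((t:ℕ)+1) := by
    ext j
    simp only [Finset.mem_filter, Finset.mem_range, Nat.lt_succ_iff]
    have := t.is_lt
    omega
  have key := keysum a ((t:ℕ)+1)
  calc L.mulVec v t
      = ∑ j : Fin n, (if j ≤ t then 1 else 0) * v j := by
        simp [Matrix.mulVec, dotProduct, hL]
    _ = ∑ j : Fin n, (if (j:ℕ) ≤ (t:ℕ) then c * Real.cos (((j:ℝ)+1/2) * a) else 0) := by
        refine Finset.sum_congr rfl fun j _ => ?_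
        rw [hv j, hang]
        by_cases h : (j:ℕ) ≤ (t:ℕ)
        · rw [if_pos h, if_pos (Fin.le_def.mpr h), one_mul]
        · rw [if_neg h, if_neg (fun hh => h (Fin.le_def.mp hh)), zero_mul]
    _ = ∑ j ∈ Finset.range n, (if j ≤ (t:ℕ) then c * Real.cos (((j:ℝ)+1/2) * a) else 0) := by
        rw [Fin.sum_univ_eq_sum_range (fun j => if j ≤ (t:ℕ) then c * Real.cos (((j:ℝ)+1/2) * a) else 0) n]
    _ = ∑ j ∈ Finset.range ((t:ℕ)+1), c * Real.cos (((j:ℝ)+1/2) * a) := by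
        rw [← hfil, Finset.sum_filter]
    _ = ((2 - 2 * Real.cos a) ^ (-(1/2) : ℝ)) • u t := by
        rw [← Finset.mul_sum, hu t, hang, hsigma, smul_eq_mul]
        push_cast at key ⊢
        have h2s : (2 * Real.sin (a/2)) ≠ 0 := by positivity
        rw [div_mul_eq_mul_div, one_mul, eq_div_iff h2s]
        linear_combination c * key
end
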